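/- Let n ≥ 2 and 1 ≤ μ ≤ n be integers, and let λ₁ ≤ λ₂ ≤ ⋯ ≤ λₙ be real numbers with λ₁ = λ₂ = ⋯ = λ_μ and, if μ < n, λ_μ < λ_{μ+1} (so μ is the multiplicity of the smallest value). Let A : ℝ → Matrix (Fin n) (Fin n) ℝ be a smooth one-parameter family of symmetric n×n matrices with A(0) equal to the diagonal matrix diag(λ₁, …, λₙ), and let φ : ℝ → ℝ be a smooth function with φ(0) = λ₁, such that for every s ∈ ℝ and every vector v ∈ ℝⁿ one has vᵀ A(s) v ≥ φ(s) ‖v‖². Then the second derivatives at s = 0 satisfy φ″(0) ≤ A″(0)_{11} − 2 Σ_{l > μ} (λ_l − λ₁)⁻¹ (A′(0)_{1l})². -/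

import Mathlib

open Finset
open scoped ContDiff

lemma cd_diff {f : ℝ → ℝ} (hf : ContDiff ℝ ∞ f) : Differentiable ℝ f :=
  (contDiff_infty_iff_deriv.mp hf).1

lemma cd_deriv {f : ℝ → ℝ} (hf : ContDiff ℝ ∞ f) : ContDiff ℝ ∞ (deriv f) :=
  (contDiff_infty_iff_deriv.mp hf).2

lemma deriv2_mul {f g : ℝ → ℝ} (hf : ContDiff ℝ ∞ f) (hg : ContDiff ℝ ∞ g) (x : ℝ) :
    deriv (deriv (fun s => f s * g s)) x
      = deriv (deriv f) x * g x + 2 * (deriv f x * deriv g x) + f x * deriv (deriv g) x := by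
  have hD : deriv (fun s => f s * g s) = fun s => deriv f s * g s + f s * deriv g s := by
    funext s
    exact deriv_mul (cd_diff hf s) (cd_diff hg s)
  rw [hD, deriv_fun_add (show DifferentiableAt ℝ (fun s => deriv f s * g s) x from (cd_diff (cd_deriv hf) x).mul (cd_diff hg x))
      (show DifferentiableAt ℝ (fun s => f s * deriv g s) x from (cd_diff hf x).mul (cd_diff (cd_deriv hg) x)),
    deriv_fun_mul (cd_diff (cd_deriv hf) x) (cd_diff hg x),
    deriv_fun_mul (cd_diff hf x) (cd_diff (cd_deriv hg) x)]
  ring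

lemma deriv2_sum {ι : Type*} (u : Finset ι) (f : ι → ℝ → ℝ)
    (hf : ∀ i ∈ u, ContDiff ℝ ∞ (f i)) (x : ℝ) :
    deriv (deriv (fun t => ∑ i ∈ u, f i t)) x = ∑ i ∈ u, deriv (deriv (f i)) x := by
  have hD : deriv (fun t => ∑ i ∈ u, f i t) = fun t => ∑ i ∈ u, deriv (f i) t := by
    funext t; exact deriv_fun_sum (fun i hi => cd_diff (hf i hi) t)
  rw [hD]; exact deriv_fun_sum (fun i hi => cd_diff (cd_deriv (hf i hi)) x)

lemma deriv2_sub {f g : ℝ → ℝ} (hf : ContDiff ℝ ∞ f) (hg : ContDiff ℝ ∞ g) (x : ℝ) :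
    deriv (deriv (fun s => f s - g s)) x = deriv (deriv f) x - deriv (deriv g) x := by
  have hD : deriv (fun s => f s - g s) = fun s => deriv f s - deriv g s := by
    funext s; exact deriv_sub (cd_diff hf s) (cd_diff hg s)
  rw [hD]; exact deriv_sub (cd_diff (cd_deriv hf) x) (cd_diff (cd_deriv hg) x)

lemma second_deriv_nonneg {g : ℝ → ℝ} (hg : ContDiff ℝ ∞ g) (h0 : g 0 = 0)
    (hnn : ∀ s, 0 ≤ g s) : 0 ≤ deriv (deriv g) 0 := by
  by_contra hlt
  push_neg at hlt
  have hmin : IsLocalMin g 0 := Filter.Eventually.of_forall fun s => by rw [h0]; exact hnn s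
  have hD0 : deriv g 0 = 0 := hmin.deriv_eq_zero
  have hder : HasDerivAt (deriv g) (deriv (deriv g) 0) 0 :=
    (cd_diff (cd_deriv hg) 0).hasDerivAt
  have hslope := hasDerivAt_iff_tendsto_slope.mp hder
  have hev : ∀ᶠ s in nhdsWithin 0 {(0:ℝ)}ᶜ, slope (deriv g) 0 s < 0 :=
    hslope.eventually_lt_const hlt
  obtain ⟨ε, hε, hball⟩ := Metric.mem_nhdsWithin_iff.mp hev
  have hderivneg : ∀ x : ℝ, 0 < x → x < ε → deriv g x < 0 := by
    intro x hx0 hxε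
    have hx : x ∈ Metric.ball (0:ℝ) ε ∩ {(0:ℝ)}ᶜ := by
      constructor
      · simpa [Real.dist_eq, abs_of_pos hx0] using hxε
      · simpa using ne_of_gt hx0
    have := hball hx
    have hs : slope (deriv g) 0 x = deriv g x / x := by
      simp [slope_def_field, hD0]
    simp only [Set.mem_setOf_eq] at this
    rw [hs] at this
    exact ((div_neg_iff.mp this).resolve_left (fun h => absurd h.2 (not_lt.mpr hx0.le))).1
  have hanti : StrictAntiOn g (Set.Icc 0 (ε/2)) := by
    apply strictAntiOn_of_deriv_neg (convex_Icc _ _) ((cd_diff hg).continuous.continuousOn)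
    intro x hx
    rw [interior_Icc] at hx
    exact hderivneg x hx.1 (by linarith [hx.2])
  have : g (ε/2) < g 0 :=
    hanti (Set.left_mem_Icc.mpr (by linarith)) (Set.right_mem_Icc.mpr (by linarith)) (by linarith)
  rw [h0] at this
  exact absurd (hnn (ε/2)) (not_le.mpr this)

/-- Second-derivative estimate at a touching point (matrix version of the second part of
Lemma 4.1): if `A(s)` is a smooth family of symmetric matrices with `A(0) = diag(λ)`,
the smallest value `λ₁ = ⋯ = λ_μ` of the ordered list `λ` has multiplicity `μ`, and
`vᵀ A(s) v ≥ φ(s) ‖v‖²` for a smooth function `φ` with `φ(0) = λ₁`, then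
`φ″(0) ≤ A″(0)₁₁ − 2 ∑_{l>μ} (λ_l − λ₁)⁻¹ (A′(0)_{1l})²` (written `0`-indexed,
so the index `1` of the paper is `⟨0, _⟩` and `l > μ` becomes `μ ≤ (l : ℕ)`). -/
theorem second_deriv_at_touching_point (n μ : ℕ) (hn : 2 ≤ n) (hμ1 : 1 ≤ μ) (hμn : μ ≤ n)
    (lam : Fin n → ℝ)
    (hmono : ∀ i j : Fin n, i ≤ j → lam i ≤ lam j)
    (hmult : ∀ i : Fin n, (i : ℕ) < μ → lam i = lam ⟨0, by omega⟩)
    (hgap : ∀ hμ : μ < n, lam ⟨μ - 1, by omega⟩ < lam ⟨μ, hμ⟩)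
    (A : ℝ → Matrix (Fin n) (Fin n) ℝ)
    (hA : ∀ i j : Fin n, ContDiff ℝ (⊤ : ℕ∞) fun s => A s i j)
    (hAsymm : ∀ s : ℝ, (A s).IsSymm)
    (hA0 : A 0 = Matrix.diagonal lam)
    (φ : ℝ → ℝ) (hφ : ContDiff ℝ (⊤ : ℕ∞) φ)
    (hφ0 : φ 0 = lam ⟨0, by omega⟩)
    (hbar : ∀ (s : ℝ) (v : EuclideanSpace ℝ (Fin n)),
      φ s * ‖v‖ ^ 2 ≤ ∑ i, ∑ j, v i * A s i j * v j) :
    deriv (deriv φ) 0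
      ≤ deriv (deriv (fun s => A s ⟨0, by omega⟩ ⟨0, by omega⟩)) 0
        - 2 * ∑ l ∈ univ.filter (fun l : Fin n => μ ≤ (l : ℕ)),
            (lam l - lam ⟨0, by omega⟩)⁻¹ * (deriv (fun s => A s ⟨0, by omega⟩ l) 0) ^ 2 := by
  classical
  have hn0 : 0 < n := by omega
  set i0 : Fin n := ⟨0, hn0⟩ with hi0def
  have hA' : ∀ i j, ContDiff ℝ ∞ fun s => A s i j := fun i j => (hA i j).of_le (by simp)
  have hφ' : ContDiff ℝ ∞ φ := hφ.of_le (by simp)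
  set dA : Fin n → Fin n → ℝ := fun i j => deriv (fun s => A s i j) 0 with hdA
  set ddA : Fin n → Fin n → ℝ := fun i j => deriv (deriv (fun s => A s i j)) 0 with hddA
  -- positivity of the gap for l ≥ μ
  have hpos : ∀ l : Fin n, μ ≤ (l : ℕ) → lam i0 < lam l := by
    intro l hl
    have hμn' : μ < n := lt_of_le_of_lt hl l.isLt
    have h1 : lam ⟨μ - 1, by omega⟩ = lam i0 := by
      have := hmult ⟨μ - 1, by omega⟩ (by simp; omega)
      simpa [hi0def] using this
    have h2 : lam ⟨μ, hμn'⟩ ≤ lam l := hmono _ _ (by simpa [Fin.le_def] using hl)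
    have h3 := hgap hμn'
    linarith
  -- the test direction
  set w : Fin n → ℝ := fun l => if μ ≤ (l : ℕ) then -((lam l - lam i0)⁻¹ * dA i0 l) else 0
    with hwdef
  have hw0 : w i0 = 0 := by simp [hwdef, hi0def]
  set e : Fin n → ℝ := fun i => if i = i0 then 1 else 0 with hedef
  set c : Fin n → ℝ → ℝ := fun i s => e i + s * w i with hcdef
  have hc_cd : ∀ i, ContDiff ℝ ∞ (c i) := fun i =>
    contDiff_const.add (contDiff_id.mul contDiff_const)
  have hc0 : ∀ i, c i 0 = e i := by intro i; simp [hcdef]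
  have hcD : ∀ i x, deriv (c i) x = w i := by
    intro i x
    have h : HasDerivAt (c i) (1 * w i) x := ((hasDerivAt_id x).mul_const (w i)).const_add (e i)
    simpa using h.deriv
  have hcDfun : ∀ i, deriv (c i) = fun _ => w i := fun i => funext (hcD i)
  have hcD2 : ∀ i x, deriv (deriv (c i)) x = 0 := by
    intro i x; rw [hcDfun i]; simp
  set F : ℝ → ℝ := fun s => ∑ i, ∑ j, c i s * A s i j * c j s with hFdef
  set N : ℝ → ℝ := fun s => ∑ i, c i s * c i s with hNdef
  set g : ℝ → ℝ := fun s => F s - φ s * N s with hgdef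
  have hT_cd : ∀ i j : Fin n, ContDiff ℝ ∞ (fun s => c i s * A s i j * c j s) :=
    fun i j => ((hc_cd i).mul (hA' i j)).mul (hc_cd j)
  have hF_cd : ContDiff ℝ ∞ F :=
    ContDiff.sum fun i _ => ContDiff.sum fun j _ => hT_cd i j
  have hN_cd : ContDiff ℝ ∞ N := ContDiff.sum fun i _ => (hc_cd i).mul (hc_cd i)
  have hg_cd : ContDiff ℝ ∞ g := hF_cd.sub (hφ'.mul hN_cd)
  -- nonnegativity
  have hgnn : ∀ s, 0 ≤ g s := by
    intro s
    have h := hbar s (WithLp.toLp 2 (fun i => c i s))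
    have hnorm : ‖(WithLp.toLp 2 (fun i => c i s))‖ ^ 2 = N s := by
      rw [EuclideanSpace.norm_eq, Real.sq_sqrt (by positivity)]
      simp [hNdef, Real.norm_eq_abs, sq_abs, sq]
    rw [hnorm] at h
    have hrhs : (∑ i, ∑ j, (WithLp.toLp 2 (fun i => c i s)) i
        * A s i j * (WithLp.toLp 2 (fun i => c i s)) j) = F s := rfl
    rw [hrhs] at h
    simp only [hgdef]
    linarith
  -- value at 0
  have hg0 : g 0 = 0 := by
    have hF0 : F 0 = lam i0 := by
      simp only [hFdef, hc0, hedef, hA0]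
      rw [Finset.sum_eq_single i0]
      · rw [Finset.sum_eq_single i0]
        · simp [Matrix.diagonal_apply_eq]
        · intro j _ hj; simp [hj]
        · intro h; exact absurd (Finset.mem_univ i0) h
      · intro i _ hi; simp [hi]
      · intro h; exact absurd (Finset.mem_univ i0) h
    have hN0 : N 0 = 1 := by
      simp only [hNdef, hc0, hedef]
      rw [Finset.sum_eq_single i0]
      · simp
      · intro i _ hi; simp [hi]
      · intro h; exact absurd (Finset.mem_univ i0) h
    simp only [hgdef, hF0, hN0, hφ0, mul_one]
    simp [hi0def]
  -- second derivative of each entry of the quadratic form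
  have hT2 : ∀ i j : Fin n, deriv (deriv (fun s => c i s * A s i j * c j s)) 0
      = (2 * (w i * dA i j) + e i * ddA i j) * e j
        + 2 * ((w i * A 0 i j + e i * dA i j) * w j) := by
    intro i j
    have h1 := deriv2_mul (f := fun s => c i s * A s i j) (g := c j)
      ((hc_cd i).mul (hA' i j)) (hc_cd j) 0
    have h2 := deriv2_mul (f := c i) (g := fun s => A s i j) (hc_cd i) (hA' i j) 0
    have h3 : deriv (fun s => c i s * A s i j) 0 = w i * A 0 i j + e i * dA i j := by
      rw [deriv_fun_mul (cd_diff (hc_cd i) 0) (cd_diff (hA' i j) 0), hcD i, hc0]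
    rw [h1, h2, h3]
    simp only [hcD, hcD2, hc0, hdA, hddA]
    ring
  have hF2 : deriv (deriv F) 0
      = ∑ i, ∑ j, ((2 * (w i * dA i j) + e i * ddA i j) * e j
          + 2 * ((w i * A 0 i j + e i * dA i j) * w j)) := by
    have ho := deriv2_sum univ (fun i t => ∑ j, c i t * A t i j * c j t)
      (fun i _ => ContDiff.sum fun j _ => hT_cd i j) 0
    rw [hFdef, ho]
    refine Finset.sum_congr rfl fun i _ => ?_
    have hi := deriv2_sum univ (fun j t => c i t * A t i j * c j t)
      (fun j _ => hT_cd i j) 0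
    rw [hi]
    exact Finset.sum_congr rfl fun j _ => hT2 i j
  have hAij : ∀ i j : Fin n, A 0 i j = if i = j then lam i else 0 := by
    intro i j; rw [hA0]; exact Matrix.diagonal_apply lam i j
  have hsum : (∑ i, ∑ j, ((2 * (w i * dA i j) + e i * ddA i j) * e j
          + 2 * ((w i * A 0 i j + e i * dA i j) * w j)))
      = ddA i0 i0 + 2 * (∑ l, w l * dA l i0) + 2 * (∑ l, lam l * (w l * w l))
        + 2 * (∑ l, dA i0 l * w l) := by
    have inner : ∀ i : Fin n, (∑ j, ((2 * (w i * dA i j) + e i * ddA i j) * e j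
          + 2 * ((w i * A 0 i j + e i * dA i j) * w j)))
        = (2 * (w i * dA i i0) + e i * ddA i i0)
          + (2 * (lam i * (w i * w i)) + 2 * (e i * ∑ j, dA i j * w j)) := by
      intro i
      rw [Finset.sum_add_distrib]
      congr 1
      · simp only [hedef, mul_ite, mul_one, mul_zero]
        rw [Finset.sum_ite_eq' univ i0]
        simp
      · have h1 : ∀ j : Fin n, 2 * ((w i * A 0 i j + e i * dA i j) * w j)
            = 2 * (w i * (A 0 i j * w j)) + 2 * (e i * (dA i j * w j)) := by
          intro j; ring
        rw [Finset.sum_congr rfl fun j _ => h1 j, Finset.sum_add_distrib]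
        congr 1
        · have h2 : ∀ j : Fin n, 2 * (w i * (A 0 i j * w j))
              = if i = j then 2 * (w i * (lam i * w j)) else 0 := by
            intro j; rw [hAij]; split <;> ring
          rw [Finset.sum_congr rfl fun j _ => h2 j, Finset.sum_ite_eq univ i]
          simp only [Finset.mem_univ, if_true]
          ring
        · rw [← Finset.mul_sum, ← Finset.mul_sum]
    rw [Finset.sum_congr rfl fun i _ => inner i, Finset.sum_add_distrib,
      Finset.sum_add_distrib, Finset.sum_add_distrib]
    have e1 : ∑ i, e i * ddA i i0 = ddA i0 i0 := by
      simp only [hedef, ite_mul, one_mul, zero_mul]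
      rw [Finset.sum_ite_eq' univ i0]
      simp
    have e4 : ∑ i, 2 * (e i * ∑ j, dA i j * w j) = 2 * (∑ l, dA i0 l * w l) := by
      have h3 : ∀ i : Fin n, 2 * (e i * ∑ j, dA i j * w j)
          = if i = i0 then 2 * ∑ j, dA i j * w j else 0 := by
        intro i; simp only [hedef]; split <;> ring
      rw [Finset.sum_congr rfl fun i _ => h3 i, Finset.sum_ite_eq' univ i0]
      simp
    rw [e1, e4, ← Finset.mul_sum, ← Finset.mul_sum]
    ring
  -- derivatives of N
  have hN0 : N 0 = 1 := by
    simp only [hNdef, hc0, hedef]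
    rw [Finset.sum_eq_single i0]
    · simp
    · intro i _ hi; simp [hi]
    · intro h; exact absurd (Finset.mem_univ i0) h
  have hN1 : deriv N 0 = 0 := by
    rw [hNdef, deriv_fun_sum (fun i _ => (show DifferentiableAt ℝ (fun s => c i s * c i s) 0 from (cd_diff (hc_cd i) 0).mul (cd_diff (hc_cd i) 0)))]
    have h1 : ∀ i : Fin n, deriv (fun s => c i s * c i s) 0
        = (if i = i0 then w i + w i else 0) := by
      intro i
      rw [deriv_fun_mul (cd_diff (hc_cd i) 0) (cd_diff (hc_cd i) 0)]
      simp only [hcD, hc0, hedef]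
      split <;> ring
    rw [Finset.sum_congr rfl fun i _ => h1 i, Finset.sum_ite_eq' univ i0]
    simp [hw0]
  have hN2 : deriv (deriv N) 0 = 2 * ∑ i, w i * w i := by
    rw [hNdef, deriv2_sum univ (fun i t => c i t * c i t)
      (fun i _ => (hc_cd i).mul (hc_cd i)) 0]
    have h1 : ∀ i : Fin n, deriv (deriv (fun s => c i s * c i s)) 0 = 2 * (w i * w i) := by
      intro i
      rw [deriv2_mul (hc_cd i) (hc_cd i) 0]
      simp only [hcD, hcD2, hc0]
      ring
    rw [Finset.sum_congr rfl fun i _ => h1 i, ← Finset.mul_sum]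
  have hφN2 : deriv (deriv (fun s => φ s * N s)) 0
      = deriv (deriv φ) 0 + 2 * lam i0 * ∑ i, w i * w i := by
    rw [deriv2_mul hφ' hN_cd 0, hN0, hN1, hN2, hφ0]
    ring
  have hg2 : deriv (deriv g) 0
      = deriv (deriv F) 0 - deriv (deriv (fun s => φ s * N s)) 0 := by
    rw [hgdef]
    exact deriv2_sub hF_cd (hφ'.mul hN_cd) 0
  -- symmetry of the derivative matrix
  have hsymm : ∀ l : Fin n, dA l i0 = dA i0 l := by
    intro l
    have h : (fun s => A s l i0) = fun s => A s i0 l :=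
      funext fun s => ((hAsymm s).apply l i0).symm
    simp only [hdA]
    rw [h]
  -- the inverse-gap sum
  set SI : ℝ := ∑ l ∈ univ.filter (fun l : Fin n => μ ≤ (l : ℕ)),
      (lam l - lam i0)⁻¹ * (dA i0 l) ^ 2 with hSIdef
  have hSc : ∑ l, dA i0 l * w l = -SI := by
    have h1 : ∀ l : Fin n, dA i0 l * w l
        = if μ ≤ (l : ℕ) then -((lam l - lam i0)⁻¹ * (dA i0 l) ^ 2) else 0 := by
      intro l; simp only [hwdef]; split <;> ring
    rw [Finset.sum_congr rfl fun l _ => h1 l, ← Finset.sum_filter, hSIdef,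
      ← Finset.sum_neg_distrib]
  have hSa : ∑ l, w l * dA l i0 = -SI := by
    rw [Finset.sum_congr rfl fun l _ => by rw [hsymm l, mul_comm], hSc]
  have hSb : (∑ l, lam l * (w l * w l)) - lam i0 * ∑ l, w l * w l = SI := by
    have h1 : (∑ l, lam l * (w l * w l)) - lam i0 * ∑ l, w l * w l
        = ∑ l, (lam l - lam i0) * (w l * w l) := by
      rw [Finset.mul_sum, ← Finset.sum_sub_distrib]
      exact Finset.sum_congr rfl fun l _ => by ring
    have h2 : ∀ l : Fin n, (lam l - lam i0) * (w l * w l)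
        = if μ ≤ (l : ℕ) then (lam l - lam i0)⁻¹ * (dA i0 l) ^ 2 else 0 := by
      intro l
      simp only [hwdef]
      split
      · rename_i hl
        have hne : lam l - lam i0 ≠ 0 := ne_of_gt (sub_pos.mpr (hpos l hl))
        rw [show (lam l - lam i0) * (-((lam l - lam i0)⁻¹ * dA i0 l)
              * -((lam l - lam i0)⁻¹ * dA i0 l))
            = ((lam l - lam i0) * (lam l - lam i0)⁻¹)
              * ((lam l - lam i0)⁻¹ * (dA i0 l) ^ 2) from by ring,
          mul_inv_cancel₀ hne, one_mul]
      · ring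
    rw [h1, Finset.sum_congr rfl fun l _ => h2 l, ← Finset.sum_filter, hSIdef]
  -- put everything together
  have hkey := second_deriv_nonneg hg_cd hg0 hgnn
  rw [hg2, hF2, hsum, hφN2, hSa, hSc] at hkey
  have final : deriv (deriv φ) 0 ≤ ddA i0 i0 - 2 * SI := by linarith
  exact final
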